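/- arXiv:0803.4373 — 4 statements merged into one kernel-verified Lean document; each statement's English description precedes it below -/
import Mathlib

section
/- Let A_1, A_2, B_1, B_2 be Hermitian operators on a Hilbert space satisfying A_j² = I, B_k² = I, and [A_j, B_k] = 0 for all j, k ∈ {1,2}. Then the CHSH Bell operator B = A_1B_1 + A_1B_2 + A_2B_1 − A_2B_2 satisfies B ≤ 2√2 · I (as operators). -/
/-! Tsirelson's sum of squares: `2√2 - 𝓑 = (√2)⁻¹ • (P² + Q²)` with the self-adjoint
`P = (√2)⁻¹ • (A₁ + A₀) - B₀` and `Q = (√2)⁻¹ • (A₁ - A₀) + B₁`. Mathlib proves the bound this way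
in every star-ordered `ℝ`-algebra (`tsirelson_inequality`), and `H →L[ℂ] H` with the Loewner
order is one. -/

/-- CHSH/Tsirelson bound: for Hermitian involutions `A₁,A₂,B₁,B₂` with each `Aⱼ`
commuting with each `Bₖ`, the CHSH Bell operator is at most `2√2 · I`. -/
theorem chsh_operator_bound {H : Type*} [NormedAddCommGroup H]
    [InnerProductSpace ℂ H] [CompleteSpace H]
    (A B : Fin 2 → H →L[ℂ] H)
    (hA : ∀ j, IsSelfAdjoint (A j)) (hB : ∀ k, IsSelfAdjoint (B k))
    (hA2 : ∀ j, A j * A j = 1) (hB2 : ∀ k, B k * B k = 1)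
    (hcomm : ∀ j k, A j * B k = B k * A j) :
    (((2 * Real.sqrt 2 : ℝ) : ℂ) • (1 : H →L[ℂ] H)
      - (A 0 * B 0 + A 0 * B 1 + A 1 * B 0 - A 1 * B 1)).IsPositive := by
  have hCHSH : IsCHSHTuple (A 0) (A 1) (B 0) (B 1) :=
    { A₀_inv := (sq _).trans (hA2 0), A₁_inv := (sq _).trans (hA2 1)
      B₀_inv := (sq _).trans (hB2 0), B₁_inv := (sq _).trans (hB2 1)
      A₀_sa := hA 0, A₁_sa := hA 1, B₀_sa := hB 0, B₁_sa := hB 1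
      A₀B₀_commutes := hcomm 0 0, A₀B₁_commutes := hcomm 0 1
      A₁B₀_commutes := hcomm 1 0, A₁B₁_commutes := hcomm 1 1 }
  have hsqrt_two_cube : Real.sqrt 2 ^ 3 = 2 * Real.sqrt 2 := by
    rw [pow_succ, Real.sq_sqrt zero_le_two]
  rw [← ContinuousLinearMap.nonneg_iff_isPositive, sub_nonneg, Complex.coe_smul,
    ← hsqrt_two_cube]
  exact tsirelson_inequality _ _ _ _ hCHSH
end

section
/- Let A_1, A_2, B_1, B_2 be operators on a Hilbert space with A_j² = I, B_k² = I, A_j = A_j†, B_k = B_k†, and [A_j, B_k] = 0 for all j, k ∈ {1,2}. With h_1 = A_1 + A_2 − √2·B_1 and h_2 = A_1 − A_2 − √2·B_2, the identity 2√2·I − (A_1B_1 + A_1B_2 + A_2B_1 − A_2B_2) = (1/(2√2))(h_1†h_1 + h_2†h_2) holds. -/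
/-! Since `h₁` and `h₂` are self-adjoint, `hᵢ†hᵢ = hᵢ²`. Expanding `h₁² + h₂²` with `Aⱼ² = Bₖ² = 1`
and `[Aⱼ, Bₖ] = 0`, the terms `A₀A₁ + A₁A₀` cancel, the squares add up to `8 = (2√2)²`, and the
remaining terms are `−2√2` times the CHSH operator. -/

def chshOperator {R : Type*} [Ring R] (A B : Fin 2 → R) : R :=
  A 0 * B 0 + A 0 * B 1 + A 1 * B 0 - A 1 * B 1

theorem mul_self_add_mul_self_eq_smul_sub_chshOperator {𝕜 R : Type*} [CommRing 𝕜] [Ring R]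
    [Algebra 𝕜 R]
    (A B : Fin 2 → R) (hA2 : ∀ j, A j * A j = 1) (hB2 : ∀ k, B k * B k = 1)
    (hcomm : ∀ j k, A j * B k = B k * A j) {s : 𝕜} (hs : s * s = 2) :
    (A 0 + A 1 - s • B 0) * (A 0 + A 1 - s • B 0)
        + (A 0 - A 1 - s • B 1) * (A 0 - A 1 - s • B 1)
      = (2 * s) • ((2 * s) • 1 - chshOperator A B) := by
  simp only [chshOperator, add_mul, mul_add, sub_mul, mul_sub, smul_mul_assoc, mul_smul_comm,
    hA2, hB2, ← hcomm]
  linear_combination (norm := module) (-2 * hs) • (1 : R)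

/-- The explicit weighted sum-of-squares identity certifying the CHSH/Tsirelson bound:
`2√2·I − (A₁B₁ + A₁B₂ + A₂B₁ − A₂B₂) = (1/(2√2))(h₁†h₁ + h₂†h₂)` with
`h₁ = A₁ + A₂ − √2·B₁` and `h₂ = A₁ − A₂ − √2·B₂`. -/
theorem chsh_sos_identity {H : Type*} [NormedAddCommGroup H]
    [InnerProductSpace ℂ H] [CompleteSpace H]
    (A B : Fin 2 → H →L[ℂ] H)
    (hA : ∀ j, IsSelfAdjoint (A j)) (hB : ∀ k, IsSelfAdjoint (B k))
    (hA2 : ∀ j, A j * A j = 1) (hB2 : ∀ k, B k * B k = 1)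
    (hcomm : ∀ j k, A j * B k = B k * A j)
    (h₁ h₂ : H →L[ℂ] H)
    (hh₁ : h₁ = A 0 + A 1 - ((Real.sqrt 2 : ℝ) : ℂ) • B 0)
    (hh₂ : h₂ = A 0 - A 1 - ((Real.sqrt 2 : ℝ) : ℂ) • B 1) :
    ((2 * Real.sqrt 2 : ℝ) : ℂ) • (1 : H →L[ℂ] H)
        - (A 0 * B 0 + A 0 * B 1 + A 1 * B 0 - A 1 * B 1)
      = ((1 / (2 * Real.sqrt 2) : ℝ) : ℂ) •
          (ContinuousLinearMap.adjoint h₁ * h₁ + ContinuousLinearMap.adjoint h₂ * h₂) := by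
  have hsqrt_sa : IsSelfAdjoint ((Real.sqrt 2 : ℝ) : ℂ) := Complex.conj_ofReal _
  have hsqrt_sq : ((Real.sqrt 2 : ℝ) : ℂ) * ((Real.sqrt 2 : ℝ) : ℂ) = 2 := by
    exact_mod_cast Real.mul_self_sqrt zero_le_two
  have hh₁_sa : IsSelfAdjoint h₁ := hh₁ ▸ ((hA 0).add (hA 1)).sub (hsqrt_sa.smul (hB 0))
  have hh₂_sa : IsSelfAdjoint h₂ := hh₂ ▸ ((hA 0).sub (hA 1)).sub (hsqrt_sa.smul (hB 1))
  have hcoef : ((1 / (2 * Real.sqrt 2) : ℝ) : ℂ) * (2 * ((Real.sqrt 2 : ℝ) : ℂ)) = 1 := by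
    push_cast
    field_simp
  rw [hh₁_sa.adjoint_eq, hh₂_sa.adjoint_eq, hh₁, hh₂,
    mul_self_add_mul_self_eq_smul_sub_chshOperator A B hA2 hB2 hcomm hsqrt_sq,
    smul_smul, hcoef, one_smul, chshOperator]
  push_cast
  rfl
end

section
/- The 4×4 real symmetric matrix Γ = (1/2)·[[√2, 0, −1, −1], [0, √2, −1, 1], [−1, −1, √2, 0], [−1, 1, 0, √2]] is positive semidefinite and has trace 2√2. -/
/-!
`Γ` is a scaled Gram matrix: `Γ = (√2 / 4) • Cᵀ C` for the `2 × 4` matrix `C` whose rows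
`(√2, 0, -1, -1)` and `(0, √2, -1, 1)` encode the sum-of-squares decomposition
`2√2 · xᵀ Γ x = (√2 x₀ - x₂ - x₃)² + (√2 x₁ - x₂ + x₃)²`.
-/

open Matrix

noncomputable section

namespace CHSH

def gamma : Matrix (Fin 4) (Fin 4) ℝ :=
  (1 / 2 : ℝ) • !![√2, 0, -1, -1;
                   0, √2, -1, 1;
                   -1, -1, √2, 0;
                   -1, 1, 0, √2]

def gammaFactor : Matrix (Fin 2) (Fin 4) ℝ :=
  !![√2, 0, -1, -1;
     0, √2, -1, 1]

theorem gamma_eq_smul_conjTranspose_mul_self :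
    gamma = (√2 / 4) • (gammaFactorᴴ * gammaFactor) := by
  have hsq : √2 * √2 = 2 := Real.mul_self_sqrt zero_le_two
  ext i j
  fin_cases i <;> fin_cases j <;>
    simp [gamma, gammaFactor, Matrix.mul_apply, Fin.sum_univ_two] <;> nlinarith

theorem gamma_posSemidef : gamma.PosSemidef := by
  rw [gamma_eq_smul_conjTranspose_mul_self]
  exact (posSemidef_conjTranspose_mul_self gammaFactor).smul (by positivity)

theorem gamma_trace : gamma.trace = 2 * √2 := by
  simp [gamma, trace, Fin.sum_univ_four]
  ring

end CHSH

end

/-- The 4×4 Gram matrix from the first-level SDP certificate for the CHSH inequality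
is positive semidefinite and has trace `2√2`. -/
theorem chsh_gamma_psd_and_trace :
    ((1 / 2 : ℝ) • !![Real.sqrt 2, 0, -1, -1;
                      0, Real.sqrt 2, -1, 1;
                      -1, -1, Real.sqrt 2, 0;
                      -1, 1, 0, Real.sqrt 2] : Matrix (Fin 4) (Fin 4) ℝ).PosSemidef ∧
    ((1 / 2 : ℝ) • !![Real.sqrt 2, 0, -1, -1;
                      0, Real.sqrt 2, -1, 1;
                      -1, -1, Real.sqrt 2, 0;
                      -1, 1, 0, Real.sqrt 2] : Matrix (Fin 4) (Fin 4) ℝ).trace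
      = 2 * Real.sqrt 2 :=
  ⟨CHSH.gamma_posSemidef, CHSH.gamma_trace⟩
end

section
/- Let A_1, A_2, A_3, B_1, B_2, B_3, C_1, C_2, C_3 be Hermitian operators on a Hilbert space with A_i² = B_j² = C_k² = I and with all operators from different families pairwise commuting ([A_i,B_j] = [A_i,C_k] = [B_j,C_k] = 0). Then the Yao Bell operator B = A_1B_2C_3 + A_2B_3C_1 + A_3B_1C_2 − A_1B_3C_2 − A_2B_1C_3 − A_3B_2C_1 satisfies B ≤ 3√3 · I. -/
/-!
Write the Bell operator as the noncommutative triple product `Y = ∑ᵢ Aᵢ (B × C)ᵢ`, where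
`(B × C)ᵢ = B_{i+1} C_{i+2} - B_{i+2} C_{i+1}`; by the commutation relations `Y` is invariant under
the cyclic rotation `(A, B, C) ↦ (B, C, A)`. With `t = √3` there is the sum-of-squares identity
`3t - Y = t/18 ∑ᵢ [(tAᵢ - (B×C)ᵢ)² + (tBᵢ - (C×A)ᵢ)² + (tCᵢ - (A×B)ᵢ)²]
          + t/36 ∑_{i ≠ j} (AᵢBᵢCⱼ + AᵢBⱼCᵢ + AⱼBᵢCᵢ)²`.
Since `Aᵢ` commutes with `(B×C)ᵢ`, the first group expands to `27 - 6tY` plus `∑ᵢ (B×C)ᵢ²` and its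
two rotations. Using `Aᵢ² = Bⱼ² = Cₖ² = 1`, every squared cross product and every squared mixed sum
is a constant plus words `XᵢXⱼYⱼYᵢ` in two of the families, and these words cancel in
`2 ∑ (cross)² + ∑ (mixed)² = 54`.
All the squared elements are self-adjoint, so the right-hand side is nonnegative in any star-ordered
ℝ-algebra, in particular among the operators on a Hilbert space.
-/

open Finset

namespace Yao

variable {R : Type*}

theorem mul_mul_cancel_left_of_mul_self [Monoid R] {a : R} (ha : a * a = 1) (b : R) :
    a * (a * b) = b := by
  rw [← mul_assoc, ha, one_mul]

section Ring

variable [Ring R]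

def cross (X Y : Fin 3 → R) (i : Fin 3) : R :=
  X (i + 1) * Y (i + 2) - X (i + 2) * Y (i + 1)

def tripleProduct (X Y Z : Fin 3 → R) : R :=
  ∑ i, X i * cross Y Z i

def pairTerm (X Y : Fin 3 → R) (i j : Fin 3) : R :=
  X i * X j * Y j * Y i

def pairSum (X Y : Fin 3 → R) : R :=
  ∑ i, ∑ j, pairTerm X Y i j

def mixedSum (X Y Z : Fin 3 → R) (i j : Fin 3) : R :=
  X i * Y i * Z j + X i * Y j * Z i + X j * Y i * Z i

theorem tripleProduct_expand (X Y Z : Fin 3 → R) :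
    tripleProduct X Y Z = X 0 * Y 1 * Z 2 + X 1 * Y 2 * Z 0 + X 2 * Y 0 * Z 1
      - X 0 * Y 2 * Z 1 - X 1 * Y 0 * Z 2 - X 2 * Y 1 * Z 0 := by
  simp only [tripleProduct, cross, Fin.sum_univ_three, mul_sub, mul_assoc, Fin.isValue,
    Fin.reduceAdd]
  abel

variable {X Y Z : Fin 3 → R}

theorem tripleProduct_rotate (hXY : ∀ i j, Commute (X i) (Y j))
    (hXZ : ∀ i j, Commute (X i) (Z j)) :
    tripleProduct Y Z X = tripleProduct X Y Z := by
  simp only [tripleProduct_expand, mul_assoc, fun i j k => (hXY i j).symm.left_comm k,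
    fun i j => (hXZ i j).symm.eq]
  abel

theorem pairSum_comm (hXY : ∀ i j, Commute (X i) (Y j)) : pairSum Y X = pairSum X Y := by
  rw [pairSum, sum_comm]
  refine sum_congr rfl fun j _ => sum_congr rfl fun i _ => ?_
  simp only [pairTerm, mul_assoc, (hXY _ _).symm.left_comm, (hXY _ _).symm.eq]

theorem sum_cross_sq (hX2 : ∀ i, X i * X i = 1) (hY2 : ∀ i, Y i * Y i = 1)
    (hXY : ∀ i j, Commute (X i) (Y j)) :
    ∑ i, cross X Y i ^ 2 = 9 - pairSum X Y := by
  simp only [pairSum, pairTerm, cross, Fin.sum_univ_three, sq, mul_sub, sub_mul, mul_assoc,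
    fun i j k => (hXY i j).symm.left_comm k, fun i => mul_mul_cancel_left_of_mul_self (hX2 i), hY2,
    Fin.isValue, Fin.reduceAdd]
  grind

theorem mixedSum_sq (hX2 : ∀ i, X i * X i = 1) (hY2 : ∀ i, Y i * Y i = 1) (hZ2 : ∀ i, Z i * Z i = 1)
    (hXY : ∀ i j, Commute (X i) (Y j)) (hXZ : ∀ i j, Commute (X i) (Z j))
    (hYZ : ∀ i j, Commute (Y i) (Z j)) (i j : Fin 3) :
    mixedSum X Y Z i j ^ 2 = 3 + (pairTerm X Y i j + pairTerm X Z i j + pairTerm Y Z i j)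
      + (pairTerm X Y j i + pairTerm X Z j i + pairTerm Y Z j i) := by
  simp only [mixedSum, pairTerm, sq, mul_add, add_mul, mul_assoc,
    fun i j k => (hXY i j).symm.left_comm k, fun i j k => (hXZ i j).symm.left_comm k,
    fun i j k => (hYZ i j).symm.left_comm k, fun i => mul_mul_cancel_left_of_mul_self (hX2 i),
    fun i => mul_mul_cancel_left_of_mul_self (hY2 i), hX2, hY2, hZ2, mul_one]
  grind

theorem sum_sum_mixedSum_sq (hX2 : ∀ i, X i * X i = 1) (hY2 : ∀ i, Y i * Y i = 1)
    (hZ2 : ∀ i, Z i * Z i = 1) (hXY : ∀ i j, Commute (X i) (Y j))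
    (hXZ : ∀ i j, Commute (X i) (Z j)) (hYZ : ∀ i j, Commute (Y i) (Z j)) :
    ∑ i, ∑ j, mixedSum X Y Z i j ^ 2 = 27 + 2 • (pairSum X Y + pairSum X Z + pairSum Y Z) := by
  have fold (U V : Fin 3 → R) : ∑ i, ∑ j, pairTerm U V i j = pairSum U V := rfl
  have swap (U V : Fin 3 → R) : ∑ i, ∑ j, pairTerm U V j i = pairSum U V := sum_comm
  simp only [mixedSum_sq hX2 hY2 hZ2 hXY hXZ hYZ, sum_add_distrib, fold, swap, sum_const, card_univ,
    Fintype.card_fin, two_nsmul]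
  norm_num
  abel

theorem sum_mixedSum_sq_compl (hX2 : ∀ i, X i * X i = 1) (hY2 : ∀ i, Y i * Y i = 1)
    (hZ2 : ∀ i, Z i * Z i = 1) (hXY : ∀ i j, Commute (X i) (Y j))
    (hXZ : ∀ i j, Commute (X i) (Z j)) (hYZ : ∀ i j, Commute (Y i) (Z j)) :
    ∑ i, ∑ j ∈ {i}ᶜ, mixedSum X Y Z i j ^ 2 = 2 • (pairSum X Y + pairSum X Z + pairSum Y Z) := by
  have diag (i : Fin 3) : mixedSum X Y Z i i ^ 2 = 9 := by
    rw [mixedSum_sq hX2 hY2 hZ2 hXY hXZ hYZ]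
    simp only [pairTerm, hX2, hY2, hZ2, one_mul]
    norm_num
  have row (i : Fin 3) : ∑ j ∈ {i}ᶜ, mixedSum X Y Z i j ^ 2 = ∑ j, mixedSum X Y Z i j ^ 2 - 9 := by
    rw [Fintype.sum_eq_add_sum_compl i, diag, add_sub_cancel_left]
  simp only [row, sum_sub_distrib, sum_sum_mixedSum_sq hX2 hY2 hZ2 hXY hXZ hYZ, sum_const,
    card_univ, Fintype.card_fin]
  norm_num

end Ring

section Algebra

variable [Ring R] [Algebra ℝ R] {X Y Z : Fin 3 → R}

theorem sq_smul_sub_of_commute (t : ℝ) {a w : R} (ha : a * a = 1) (h : Commute a w) :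
    (t • a - w) ^ 2 = t ^ 2 • 1 - (2 * t) • (a * w) + w ^ 2 := by
  simp only [sq, sub_mul, mul_sub, smul_mul_assoc, mul_smul_comm, ha, h.eq]
  module

theorem sum_sq_smul_sub_cross (t : ℝ) (hX2 : ∀ i, X i * X i = 1)
    (hXY : ∀ i j, Commute (X i) (Y j)) (hXZ : ∀ i j, Commute (X i) (Z j)) :
    ∑ i, (t • X i - cross Y Z i) ^ 2 =
      (3 * t ^ 2) • 1 - (2 * t) • tripleProduct X Y Z + ∑ i, cross Y Z i ^ 2 := by
  have hcomm (i : Fin 3) : Commute (X i) (cross Y Z i) :=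
    ((hXY _ _).mul_right (hXZ _ _)).sub_right ((hXY _ _).mul_right (hXZ _ _))
  simp only [fun i => sq_smul_sub_of_commute t (hX2 i) (hcomm i), sum_add_distrib, sum_sub_distrib,
    ← smul_sum, sum_const, card_univ, Fintype.card_fin, tripleProduct]
  module

theorem smul_one_sub_tripleProduct_eq_sum_sq {t : ℝ} (ht : t ^ 2 = 3) (hX2 : ∀ i, X i * X i = 1)
    (hY2 : ∀ i, Y i * Y i = 1) (hZ2 : ∀ i, Z i * Z i = 1) (hXY : ∀ i j, Commute (X i) (Y j))
    (hXZ : ∀ i j, Commute (X i) (Z j)) (hYZ : ∀ i j, Commute (Y i) (Z j)) :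
    (3 * t) • 1 - tripleProduct X Y Z =
      (t / 18) • ∑ i, ((t • X i - cross Y Z i) ^ 2 + (t • Y i - cross Z X i) ^ 2
        + (t • Z i - cross X Y i) ^ 2)
      + (t / 36) • ∑ i, ∑ j ∈ {i}ᶜ, mixedSum X Y Z i j ^ 2 := by
  have hYX (i j : Fin 3) : Commute (Y i) (X j) := (hXY j i).symm
  have hZX (i j : Fin 3) : Commute (Z i) (X j) := (hXZ j i).symm
  have hZY (i j : Fin 3) : Commute (Z i) (Y j) := (hYZ j i).symm
  rw [sum_add_distrib, sum_add_distrib, sum_sq_smul_sub_cross t hX2 hXY hXZ,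
    sum_sq_smul_sub_cross t hY2 hYZ hYX, sum_sq_smul_sub_cross t hZ2 hZX hZY,
    tripleProduct_rotate hYZ hYX, tripleProduct_rotate hXY hXZ,
    sum_cross_sq hY2 hZ2 hYZ, sum_cross_sq hZ2 hX2 hZX, sum_cross_sq hX2 hY2 hXY, pairSum_comm hXZ,
    sum_mixedSum_sq_compl hX2 hY2 hZ2 hXY hXZ hYZ, ← map_ofNat (algebraMap ℝ R) 9,
    Algebra.algebraMap_eq_smul_one]
  linear_combination (norm := module) (-(t / 2) * ht) • (1 : R) + (ht / 3) • tripleProduct X Y Z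

end Algebra

section StarOrdered

variable [Ring R] [StarRing R] {X Y Z : Fin 3 → R}

theorem cross_isSelfAdjoint (hX : ∀ i, IsSelfAdjoint (X i)) (hY : ∀ i, IsSelfAdjoint (Y i))
    (hXY : ∀ i j, Commute (X i) (Y j)) (i : Fin 3) : IsSelfAdjoint (cross X Y i) :=
  (((hX _).commute_iff (hY _)).mp (hXY _ _)).sub (((hX _).commute_iff (hY _)).mp (hXY _ _))

theorem mixedSum_isSelfAdjoint (hX : ∀ i, IsSelfAdjoint (X i)) (hY : ∀ i, IsSelfAdjoint (Y i))
    (hZ : ∀ i, IsSelfAdjoint (Z i)) (hXY : ∀ i j, Commute (X i) (Y j))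
    (hXZ : ∀ i j, Commute (X i) (Z j)) (hYZ : ∀ i j, Commute (Y i) (Z j)) (i j : Fin 3) :
    IsSelfAdjoint (mixedSum X Y Z i j) := by
  have h (a b c : Fin 3) : IsSelfAdjoint (X a * Y b * Z c) :=
    ((((hX a).commute_iff (hY b)).mp (hXY a b)).commute_iff (hZ c)).mp
      ((hXZ a c).mul_left (hYZ b c))
  exact ((h _ _ _).add (h _ _ _)).add (h _ _ _)

theorem tripleProduct_le [PartialOrder R] [StarOrderedRing R] [Algebra ℝ R]
    [IsOrderedModule ℝ R] [StarModule ℝ R] (hX : ∀ i, IsSelfAdjoint (X i))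
    (hY : ∀ i, IsSelfAdjoint (Y i)) (hZ : ∀ i, IsSelfAdjoint (Z i)) (hX2 : ∀ i, X i * X i = 1) (hY2 : ∀ i, Y i * Y i = 1)
    (hZ2 : ∀ i, Z i * Z i = 1) (hXY : ∀ i j, Commute (X i) (Y j))
    (hXZ : ∀ i j, Commute (X i) (Z j)) (hYZ : ∀ i j, Commute (Y i) (Z j)) :
    tripleProduct X Y Z ≤ (3 * √3) • 1 := by
  have hP {U : Fin 3 → R} (hU : ∀ i, IsSelfAdjoint (U i)) {W : Fin 3 → R}
      (hW : ∀ i, IsSelfAdjoint (W i)) (i : Fin 3) : 0 ≤ (√3 • U i - W i) ^ 2 :=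
    (((IsSelfAdjoint.all √3).smul (hU i)).sub (hW i)).sq_nonneg
  rw [← sub_nonneg,
    smul_one_sub_tripleProduct_eq_sum_sq (Real.sq_sqrt (by norm_num)) hX2 hY2 hZ2 hXY hXZ hYZ]
  refine add_nonneg (smul_nonneg (by positivity) (sum_nonneg fun i _ => ?_))
    (smul_nonneg (by positivity) (sum_nonneg fun i _ => sum_nonneg fun j _ =>
      (mixedSum_isSelfAdjoint hX hY hZ hXY hXZ hYZ i j).sq_nonneg))
  exact add_nonneg (add_nonneg (hP hX (cross_isSelfAdjoint hY hZ hYZ) i)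
    (hP hY (cross_isSelfAdjoint hZ hX (fun i j => (hXZ j i).symm)) i))
    (hP hZ (cross_isSelfAdjoint hX hY hXY) i)

end StarOrdered

end Yao

/-- Yao's tripartite Bell inequality: for Hermitian involutions `Aᵢ, Bⱼ, Cₖ` (i,j,k = 1,2,3)
with operators from different families commuting, the Yao Bell operator
`A₁B₂C₃ + A₂B₃C₁ + A₃B₁C₂ − A₁B₃C₂ − A₂B₁C₃ − A₃B₂C₁` is at most `3√3 · I`. -/
theorem yao_operator_bound {H : Type*} [NormedAddCommGroup H]
    [InnerProductSpace ℂ H] [CompleteSpace H]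
    (A B C : Fin 3 → H →L[ℂ] H)
    (hA : ∀ i, IsSelfAdjoint (A i)) (hB : ∀ j, IsSelfAdjoint (B j))
    (hC : ∀ k, IsSelfAdjoint (C k))
    (hA2 : ∀ i, A i * A i = 1) (hB2 : ∀ j, B j * B j = 1) (hC2 : ∀ k, C k * C k = 1)
    (hAB : ∀ i j, A i * B j = B j * A i)
    (hAC : ∀ i k, A i * C k = C k * A i)
    (hBC : ∀ j k, B j * C k = C k * B j) :
    (((3 * Real.sqrt 3 : ℝ) : ℂ) • (1 : H →L[ℂ] H)
      - (A 0 * B 1 * C 2 + A 1 * B 2 * C 0 + A 2 * B 0 * C 1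
         - A 0 * B 2 * C 1 - A 1 * B 0 * C 2 - A 2 * B 1 * C 0)).IsPositive := by
  rw [← ContinuousLinearMap.nonneg_iff_isPositive, sub_nonneg, Complex.coe_smul,
    ← Yao.tripleProduct_expand]
  exact Yao.tripleProduct_le hA hB hC hA2 hB2 hC2 hAB hAC hBC
end
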